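/- If 2 diag(c) - W is strictly diagonally dominant (with zero-diagonal W and c_i > 0), then the quadratic game with utilities u_i(x) = b_i x_i + x_i Σ_{j≠i} W i j x_j - c_i x_i² has a unique Nash equilibrium, namely x* = (2 diag(c) - W)⁻¹ b. -/

import Mathlib

/-!
Player `i`'s utility is a concave quadratic in its own strategy `x i`, maximised exactly where
`2 c i x i = b i + ∑_{j ≠ i} W i j x j`. So the Nash equilibria are the solutions of
`(2 diag(c) - W) x = b`, and strict diagonal dominance makes this matrix invertible by
Gershgorin's theorem.
-/

open Matrix Finset

def IsNashEquilibrium {ι : Type*} [DecidableEq ι] (u : ι → (ι → ℝ) → ℝ) (x : ι → ℝ) : Prop :=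
  ∀ i, ∀ z : ℝ, u i (Function.update x i z) ≤ u i x

theorem forall_le_iff_two_mul_mul_eq {a m x : ℝ} (ha : 0 < a) :
    (∀ z : ℝ, m * z - a * z ^ 2 ≤ m * x - a * x ^ 2) ↔ 2 * a * x = m := by
  constructor
  · intro h
    set d := m - 2 * a * x
    have hgain : m * (x + d / (2 * a)) - a * (x + d / (2 * a)) ^ 2
        = m * x - a * x ^ 2 + d ^ 2 / (4 * a) := by
      field_simp
      ring
    have hd : d ^ 2 / (4 * a) ≤ 0 := by linarith [h (x + d / (2 * a))]
    rw [div_le_iff₀ (by positivity), zero_mul] at hd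
    have : d = 0 := pow_eq_zero_iff two_ne_zero |>.mp (le_antisymm hd (sq_nonneg d))
    linarith
  · rintro rfl z
    nlinarith [mul_nonneg ha.le (sq_nonneg (z - x))]

theorem Matrix.mulVec_eq_iff_eq_nonsing_inv_mulVec {n R : Type*} [Fintype n] [DecidableEq n]
    [CommRing R] {A : Matrix n n R} (hA : IsUnit A.det) (x b : n → R) :
    A *ᵥ x = b ↔ x = A⁻¹ *ᵥ b := by
  constructor
  · rintro rfl
    rw [mulVec_mulVec, nonsing_inv_mul A hA, one_mulVec]
  · rintro rfl
    rw [mulVec_mulVec, mul_nonsing_inv A hA, one_mulVec]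

section QuadraticGame

variable {ι : Type*} [Fintype ι] [DecidableEq ι]

def quadraticUtility (W : Matrix ι ι ℝ) (b c : ι → ℝ) (i : ι) (x : ι → ℝ) : ℝ :=
  b i * x i + x i * (∑ j ∈ univ.erase i, W i j * x j) - c i * (x i) ^ 2

theorem quadraticUtility_update (W : Matrix ι ι ℝ) (b c : ι → ℝ) (i : ι) (x : ι → ℝ) (z : ℝ) :
    quadraticUtility W b c i (Function.update x i z)
      = (b i + ∑ j ∈ univ.erase i, W i j * x j) * z - c i * z ^ 2 := by
  have hothers : ∀ j ∈ univ.erase i, W i j * Function.update x i z j = W i j * x j :=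
    fun j hj => by rw [Function.update_of_ne (ne_of_mem_erase hj)]
  rw [quadraticUtility, sum_congr rfl hothers, Function.update_self]
  ring

theorem mulVec_apply_eq_sum_erase {α : Type*} [NonUnitalNonAssocSemiring α] {W : Matrix ι ι α}
    {i : ι} (hWi : W i i = 0) (x : ι → α) :
    (W *ᵥ x) i = ∑ j ∈ univ.erase i, W i j * x j := by
  rw [mulVec, dotProduct, ← add_sum_erase _ _ (mem_univ i), hWi, zero_mul, zero_add]

theorem two_smul_diagonal_sub_mulVec_apply {W : Matrix ι ι ℝ} {i : ι} (hWi : W i i = 0)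
    (c x : ι → ℝ) :
    (((2 : ℝ) • diagonal c - W) *ᵥ x) i = 2 * c i * x i - ∑ j ∈ univ.erase i, W i j * x j := by
  rw [sub_mulVec, smul_mulVec, Pi.sub_apply, Pi.smul_apply, mulVec_diagonal,
    mulVec_apply_eq_sum_erase hWi, smul_eq_mul, mul_assoc]

theorem isNashEquilibrium_quadraticUtility_iff {W : Matrix ι ι ℝ} {b c : ι → ℝ}
    (hWdiag : ∀ i, W i i = 0) (hc : ∀ i, 0 < c i) (x : ι → ℝ) :
    IsNashEquilibrium (quadraticUtility W b c) x ↔ ((2 : ℝ) • diagonal c - W) *ᵥ x = b := by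
  have hbest : ∀ i, (∀ z : ℝ, quadraticUtility W b c i (Function.update x i z)
      ≤ quadraticUtility W b c i x) ↔ (((2 : ℝ) • diagonal c - W) *ᵥ x) i = b i := by
    intro i
    -- view `x` as `update x i (x i)`, so that both sides are values of the same quadratic in `z`
    conv_lhs => rw [← Function.update_eq_self i x]
    simp only [quadraticUtility_update, Function.update_idem]
    rw [forall_le_iff_two_mul_mul_eq (hc i), two_smul_diagonal_sub_mulVec_apply (hWdiag i)]
    constructor <;> intro h <;> linarith
  rw [IsNashEquilibrium, funext_iff]
  exact forall_congr' hbest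

theorem isUnit_det_two_smul_diagonal_sub {W : Matrix ι ι ℝ} {c : ι → ℝ} (hWdiag : ∀ i, W i i = 0)
    (hsdd : ∀ i, ∑ j ∈ univ.erase i, |W i j| < 2 * c i) :
    IsUnit ((2 : ℝ) • diagonal c - W).det := by
  refine isUnit_iff_ne_zero.mpr (det_ne_zero_of_sum_row_lt_diag fun i => ?_)
  have hoff : ∀ j ∈ univ.erase i, ‖((2 : ℝ) • diagonal c - W) i j‖ = |W i j| := fun j hj => by
    simp [diagonal_apply_ne _ (ne_of_mem_erase hj).symm, Real.norm_eq_abs]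
  have hcpos : 0 ≤ 2 * c i := (sum_nonneg fun j _ => abs_nonneg (W i j)).trans (hsdd i).le
  have hdiag : ((2 : ℝ) • diagonal c - W) i i = 2 * c i := by simp [hWdiag i]
  rw [sum_congr rfl hoff, hdiag, Real.norm_eq_abs, abs_of_nonneg hcpos]
  exact hsdd i

end QuadraticGame

/-- If `2 diag(c) - W` is strictly diagonally dominant, the quadratic game
has a unique Nash equilibrium, namely `x* = (2 diag(c) - W)⁻¹ b`. -/
theorem quadratic_game_unique_NE {N : ℕ}
    (W : Matrix (Fin N) (Fin N) ℝ) (b c : Fin N → ℝ)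
    (hWdiag : ∀ i, W i i = 0) (hc : ∀ i, 0 < c i)
    (hsdd : ∀ i, ∑ j ∈ Finset.univ.erase i, |W i j| < 2 * c i)
    (u : Fin N → (Fin N → ℝ) → ℝ)
    (hu : ∀ i x, u i x =
      b i * x i + x i * (∑ j ∈ Finset.univ.erase i, W i j * x j) - c i * (x i) ^ 2) :
    (∃! xs : Fin N → ℝ, ∀ i, ∀ z : ℝ, u i (Function.update xs i z) ≤ u i xs) ∧
    (∀ i, ∀ z : ℝ,
      u i (Function.update (((2 : ℝ) • Matrix.diagonal c - W)⁻¹.mulVec b) i z) ≤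
        u i (((2 : ℝ) • Matrix.diagonal c - W)⁻¹.mulVec b)) := by
  obtain rfl : u = quadraticUtility W b c := funext fun i => funext (hu i)
  have hNE (x : Fin N → ℝ) :
      IsNashEquilibrium (quadraticUtility W b c) x ↔
        x = ((2 : ℝ) • diagonal c - W)⁻¹ *ᵥ b :=
    (isNashEquilibrium_quadraticUtility_iff hWdiag hc x).trans
      (mulVec_eq_iff_eq_nonsing_inv_mulVec (isUnit_det_two_smul_diagonal_sub hWdiag hsdd) x b)
  exact ⟨⟨_, (hNE _).mpr rfl, fun y hy => (hNE y).mp hy⟩, (hNE _).mpr rfl⟩
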